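/- arXiv:2302.07694 — 2 statements merged into one kernel-verified Lean document; each statement's English description precedes it below -/
import Mathlib

section
/- Let λ be a partition of m. Every standard Young tableau T of shape λ satisfies DesComp(T) ≤ λ in the lexicographic order on integer sequences (comparing entrywise at the first index where they differ, padding the shorter sequence with zeros), and there is exactly one standard Young tableau T of shape λ with DesComp(T) = λ. -/
/-!
Induction on the number of rows. If the descent composition of `T` starts with `α`, the entries
`1, …, α` contain no descent, so each lies weakly above its predecessor and they run along the
first row from left to right; hence `α ≤ λ₁`, and if `α = λ₁` the first row of `T` reads
`1, …, λ₁`. Deleting that row and subtracting `λ₁` from the other entries then gives a standard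
tableau of shape `(λ₂, λ₃, …)` whose descent composition is the tail of that of `T`. Reversing
this construction row by row builds the unique tableau with descent composition `λ`.
-/

open scoped Classical

namespace QC

/-- A filling assigns a natural-number entry to each cell `(i, j)`;
entries are `0` outside the shape. Values are 1-based. -/
abbrev Filling : Type := ℕ → ℕ → ℕ

/-- The cell `(i, j)` (row `i`, column `j`, both 0-based) lies in the Young diagram of `lam`. -/
def InShape (lam : List ℕ) (i j : ℕ) : Prop :=
  i < lam.length ∧ j < lam.getD i 0

/-- The finite set of cells of the Young diagram of `lam`. -/
def cells (lam : List ℕ) : Finset (ℕ × ℕ) :=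
  (Finset.range lam.length).biUnion fun i =>
    ({i} : Finset ℕ) ×ˢ Finset.range (lam.getD i 0)

/-- `lam` is a partition of `m`: weakly decreasing, positive parts, summing to `m`. -/
def IsPartitionOf (m : ℕ) (lam : List ℕ) : Prop :=
  lam.Pairwise (· ≥ ·) ∧ (∀ x ∈ lam, 0 < x) ∧ lam.sum = m

/-- `a` is a composition of `m`: positive parts summing to `m`. -/
def IsCompositionOf (m : ℕ) (a : List ℕ) : Prop :=
  (∀ x ∈ a, 0 < x) ∧ a.sum = m

/-- `T` is a semistandard Young tableau of shape `lam`: positive entries on the shape,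
zero off the shape, rows weakly increasing, columns strictly increasing. -/
def IsSSYT (lam : List ℕ) (T : Filling) : Prop :=
  (∀ i j, ¬ InShape lam i j → T i j = 0) ∧
  (∀ i j, InShape lam i j → 0 < T i j) ∧
  (∀ i j1 j2, j1 ≤ j2 → InShape lam i j2 → T i j1 ≤ T i j2) ∧
  (∀ i1 i2 j, i1 < i2 → InShape lam i2 j → T i1 j < T i2 j)

/-- All entries of `T` are at most `n`. -/
def EntriesLE (n : ℕ) (T : Filling) : Prop := ∀ i j, T i j ≤ n

/-- `T` is a standard Young tableau of shape `lam ⊢ m`: a semistandard tableau in which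
each of `1, …, m` appears exactly once. -/
def IsSYT (lam : List ℕ) (m : ℕ) (T : Filling) : Prop :=
  IsSSYT lam T ∧ EntriesLE m T ∧
    ∀ k, 1 ≤ k → k ≤ m → ∃! c : ℕ × ℕ, InShape lam c.1 c.2 ∧ T c.1 c.2 = k

/-- `k` is a descent of the standard tableau `T`: `k + 1` lies in a strictly lower row. -/
def IsDescent (lam : List ℕ) (T : Filling) (k : ℕ) : Prop :=
  ∃ i1 j1 i2 j2, InShape lam i1 j1 ∧ InShape lam i2 j2 ∧
    T i1 j1 = k ∧ T i2 j2 = k + 1 ∧ i1 < i2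

/-- The sorted list of descents of `T`, a standard tableau with `m` cells. -/
noncomputable def descentList (lam : List ℕ) (m : ℕ) (T : Filling) : List ℕ :=
  ((Finset.Ico 1 m).filter fun k => IsDescent lam T k).sort (· ≤ ·)

/-- The number of descents of `T`. -/
noncomputable def numDescents (lam : List ℕ) (m : ℕ) (T : Filling) : ℕ :=
  ((Finset.Ico 1 m).filter fun k => IsDescent lam T k).card

/-- The descent composition `(d₁, d₂ - d₁, …, m - d_{s-1})` of a standard tableau. -/
noncomputable def desComp (lam : List ℕ) (m : ℕ) (T : Filling) : List ℕ :=
  if m = 0 then [] else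
    List.zipWith (· - ·) (descentList lam m T ++ [m]) (0 :: descentList lam m T)

/-- The number of cells of `T` carrying the entry `v`. -/
def countEq (lam : List ℕ) (T : Filling) (v : ℕ) : ℕ :=
  ((cells lam).filter fun c => T c.1 c.2 = v).card

/-- The weight of `T` as a list `(γ₁, …, γₙ)`, `γᵢ` the number of entries equal to `i`. -/
def wt (lam : List ℕ) (n : ℕ) (T : Filling) : List ℕ :=
  (List.range n).map fun v => countEq lam T (v + 1)

/-- The standardization of `T`: cells are relabelled `1, …, m` in order of increasing entry,
breaking ties between equal entries by increasing column index. -/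
noncomputable def stdize (lam : List ℕ) (T : Filling) : Filling := fun i j =>
  if InShape lam i j then
    ((cells lam).filter fun c =>
      T c.1 c.2 < T i j ∨ (T c.1 c.2 = T i j ∧ c.2 ≤ j)).card
  else 0

/-- Given a weak composition `g`, `destValue g k` is the unique `i` with
`g₁ + ⋯ + g_{i-1} < k ≤ g₁ + ⋯ + g_i` (and `0` for `k = 0`). -/
def destValue (g : List ℕ) (k : ℕ) : ℕ :=
  ((List.range g.length).filter fun i => (g.take i).sum < k).length

/-- The destandardization `D_g(T₀)`: each entry `j` of `T₀` is replaced by the unique `i`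
with `g₁ + ⋯ + g_{i-1} < j ≤ g₁ + ⋯ + g_i`. -/
def Dmap (g : List ℕ) (T : Filling) : Filling := fun i j => destValue g (T i j)

/-- `Refines a b`: the composition `b` refines `a`, i.e. `b` can be cut into consecutive
blocks whose sums are the parts of `a` in order. -/
def Refines (a b : List ℕ) : Prop :=
  ∃ L : List (List ℕ), L.flatten = b ∧ L.map List.sum = a

/-- Strict lexicographic order on integer sequences. -/
def lexLt (a b : List ℕ) : Prop := List.Lex (· < ·) a b

/-- Weak lexicographic order on integer sequences. -/
def lexLe (a b : List ℕ) : Prop := a = b ∨ lexLt a b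

/-- The largest entry of `T`. -/
def maxEntry (lam : List ℕ) (T : Filling) : ℕ :=
  (cells lam).sup fun c => T c.1 c.2

/-- The weight of `T` (over all values), with zero parts deleted. -/
def wtFull (lam : List ℕ) (T : Filling) : List ℕ :=
  ((List.range (maxEntry lam T)).map fun v => countEq lam T (v + 1)).filter (· ≠ 0)

/-- The proper partial sums `α₁, α₁ + α₂, …, α₁ + ⋯ + α_{s-1}` of a composition. -/
def innerSums (a : List ℕ) : List ℕ :=
  (List.range a.length).tail.map fun t => (a.take t).sum

/-- `f : Fin m → Fin n` encodes a sequence `1 ≤ i₁ ≤ i₂ ≤ … ≤ i_m ≤ n` (via `i_t = f (t-1) + 1`)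
which ascends strictly, `i_j < i_{j+1}`, at every proper partial sum `j` of `a`. -/
def IsFWord (m n : ℕ) (a : List ℕ) (f : Fin m → Fin n) : Prop :=
  Monotone f ∧
    ∀ (t : ℕ) (ht : t + 1 < m), (t + 1) ∈ innerSums a →
      f ⟨t, Nat.lt_of_succ_lt ht⟩ < f ⟨t + 1, ht⟩

/-- The fundamental quasisymmetric polynomial `F_a(x₁, …, xₙ)` of degree `m`. -/
noncomputable def Fpoly (m n : ℕ) (a : List ℕ) : MvPolynomial (Fin n) ℤ :=
  ∑ f ∈ Finset.univ.filter (fun f : Fin m → Fin n => IsFWord m n a f),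
    ∏ t : Fin m, MvPolynomial.X (f t)

/-- The monomial `x₁^{γ₁} ⋯ xₙ^{γₙ}` of a tableau `T` of weight `γ`. -/
noncomputable def wtMonomial (lam : List ℕ) (n : ℕ) (T : Filling) :
    MvPolynomial (Fin n) ℤ :=
  ∏ i : Fin n, MvPolynomial.X i ^ countEq lam T (i.val + 1)

/-- `Rot` of a word `w` of length `k` on `{1, …, n}`: the `j`-th letter of `rot k n w`
is `n + 1 - w_{k+1-j}` (1-based), here written 0-based. -/
def rot (k n : ℕ) (w : Fin k → ℕ) : Fin k → ℕ := fun j =>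
  n + 1 - w ⟨k - 1 - j.val, by have := j.isLt; omega⟩

/-- The descent set of a word `w = w₁ ⋯ w_k`: positions `i ∈ {1, …, k-1}` with `wᵢ > w_{i+1}`
(1-based positions; `w ⟨i-1,_⟩` is `wᵢ`). -/
noncomputable def wordDes (k : ℕ) (w : Fin k → ℕ) : Finset ℕ :=
  (Finset.Ico 1 k).filter fun i =>
    ∃ (h1 : i - 1 < k) (h2 : i < k), w ⟨i, h2⟩ < w ⟨i - 1, h1⟩

/-- The descent composition of a word of length `k`. -/
noncomputable def wordDesComp (k : ℕ) (w : Fin k → ℕ) : List ℕ :=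
  if k = 0 then []
  else
    List.zipWith (· - ·) ((wordDes k w).sort (· ≤ ·) ++ [k])
      (0 :: (wordDes k w).sort (· ≤ ·))


def HasInitialFirstRow (a : ℕ) (T : Filling) : Prop :=
  ∀ j < a, T 0 j = j + 1

def dropFirstRow (a : ℕ) (T : Filling) : Filling := fun i j => T (i + 1) j - a

noncomputable def addFirstRow (a : ℕ) (rest : List ℕ) (T : Filling) : ℕ → ℕ → ℕ
  | 0, j => if j < a then j + 1 else 0
  | i + 1, j => if InShape rest i j then T i j + a else 0

section Shape

variable {a m i j : ℕ} {rest lam : List ℕ}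

@[simp]
theorem inShape_cons_zero : InShape (a :: rest) 0 j ↔ j < a := by
  simp [InShape]

@[simp]
theorem inShape_cons_succ : InShape (a :: rest) (i + 1) j ↔ InShape rest i j := by
  simp [InShape]

theorem getD_le_of_pairwise_cons (h : (a :: rest).Pairwise (· ≥ ·)) : rest.getD i 0 ≤ a := by
  rw [List.getD_eq_getElem?_getD]
  cases hi : rest[i]? with
  | none => exact Nat.zero_le a
  | some x => exact (List.pairwise_cons.1 h).1 x (List.mem_of_getElem? hi)

theorem inShape_zero_of_inShape (hlam : lam.Pairwise (· ≥ ·)) (h : InShape lam i j) :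
    InShape lam 0 j := by
  cases lam with
  | nil => exact absurd h.1 (by simp)
  | cons a rest =>
    cases i with
    | zero => exact h
    | succ i =>
      exact inShape_cons_zero.2 <|
        lt_of_lt_of_le (inShape_cons_succ.1 h).2 (getD_le_of_pairwise_cons hlam)

theorem IsPartitionOf.of_cons (h : IsPartitionOf m (a :: rest)) :
    0 < a ∧ a ≤ m ∧ IsPartitionOf (m - a) rest := by
  obtain ⟨hdec, hpos, hsum⟩ := h
  rw [List.sum_cons] at hsum
  exact ⟨hpos a (by simp), by omega, (List.pairwise_cons.1 hdec).2,
    fun x hx => hpos x (by simp [hx]), by omega⟩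

end Shape

section Descents

variable {lam : List ℕ} {m k : ℕ} {T : Filling}

theorem mem_descentList :
    k ∈ descentList lam m T ↔ (1 ≤ k ∧ k < m) ∧ IsDescent lam T k := by
  simp [descentList]

theorem descentList_pairwise_lt : (descentList lam m T).Pairwise (· < ·) :=
  (Finset.sortedLT_sort _).pairwise

theorem exists_desComp_eq_cons (hm : m ≠ 0) :
    ∃ α tl, desComp lam m T = α :: tl ∧ 1 ≤ α ∧ α ≤ m ∧
      ∀ k, 1 ≤ k → k < α → ¬ IsDescent lam T k := by
  have hsort := descentList_pairwise_lt (lam := lam) (m := m) (T := T)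
  rw [desComp, if_neg hm]
  rcases hD : descentList lam m T with _ | ⟨d, D⟩
  · refine ⟨m, [], rfl, by omega, le_rfl, fun k hk₁ hk hdes => ?_⟩
    simpa [hD] using mem_descentList.2 ⟨⟨hk₁, hk⟩, hdes⟩
  · have hd := mem_descentList.1 (hD ▸ List.mem_cons_self (l := D) : d ∈ descentList lam m T)
    refine ⟨d, _, rfl, hd.1.1, hd.1.2.le, fun k hk₁ hk hdes => ?_⟩
    have hkD : k ∈ d :: D := hD ▸ mem_descentList.2 ⟨⟨hk₁, by omega⟩, hdes⟩
    rw [hD, List.pairwise_cons] at hsort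
    rcases List.mem_cons.1 hkD with rfl | hkD
    · omega
    · exact absurd (hsort.1 k hkD) (by omega)

theorem row_le_of_not_isDescent {i₁ j₁ i₂ j₂ : ℕ} (hk : ¬ IsDescent lam T k)
    (h₁ : InShape lam i₁ j₁) (h₂ : InShape lam i₂ j₂) (hv₁ : T i₁ j₁ = k)
    (hv₂ : T i₂ j₂ = k + 1) : i₂ ≤ i₁ :=
  not_lt.1 fun h => hk ⟨i₁, j₁, i₂, j₂, h₁, h₂, hv₁, hv₂, h⟩

end Descents

namespace IsSYT

variable {lam : List ℕ} {m : ℕ} {T : Filling}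

theorem eq_of_apply_eq (hT : IsSYT lam m T) {i j i' j' : ℕ} (h : InShape lam i j)
    (h' : InShape lam i' j') (he : T i j = T i' j') : i = i' ∧ j = j' := by
  obtain ⟨c, -, hc⟩ := hT.2.2 (T i j) (hT.1.2.1 i j h) (hT.2.1 i j)
  simpa using (hc (i, j) ⟨h, rfl⟩).trans (hc (i', j') ⟨h', he.symm⟩).symm

theorem exists_inShape_apply_eq (hT : IsSYT lam m T) {k : ℕ} (hk₁ : 1 ≤ k) (hk : k ≤ m) :
    ∃ i j, InShape lam i j ∧ T i j = k :=
  let ⟨c, hc, _⟩ := hT.2.2 k hk₁ hk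
  ⟨c.1, c.2, hc⟩

theorem firstRow_of_forall_not_isDescent (hlam : lam.Pairwise (· ≥ ·)) (hT : IsSYT lam m T)
    {n : ℕ} (hn : n ≤ m) (hdes : ∀ k, 1 ≤ k → k < n → ¬ IsDescent lam T k) :
    ∀ j < n, InShape lam 0 j ∧ T 0 j = j + 1 := by
  induction n with
  | zero => intro j hj; omega
  | succ n ih =>
    replace ih := ih (by omega) fun k hk₁ hk => hdes k hk₁ (by omega)
    obtain ⟨r, c, hrc, hv⟩ := hT.exists_inShape_apply_eq (k := n + 1) (by omega) hn
    have hr : r = 0 := by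
      rcases n with _ | n
      · by_contra hr
        have h0 := inShape_zero_of_inShape hlam hrc
        have := hT.1.2.2.2 0 r c (by omega) hrc
        have := hT.1.2.1 0 c h0
        omega
      · have hn' := ih n (by omega)
        exact Nat.le_zero.1 <|
          row_le_of_not_isDescent (hdes (n + 1) (by omega) (by omega)) hn'.1 hrc hn'.2 hv
    subst hr
    have hc : n ≤ c := by
      by_contra hc
      have := (ih c (by omega)).2
      omega
    have hn₀ : InShape lam 0 n := ⟨hrc.1, lt_of_le_of_lt hc hrc.2⟩
    have hle : T 0 n ≤ n + 1 := hv ▸ hT.1.2.2.1 0 n c hc hrc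
    have hgt : n < T 0 n := by
      rcases n with _ | n
      · exact hT.1.2.1 0 0 hn₀
      · have hl := ih n (by omega)
        have hmono := hT.1.2.2.1 0 n (n + 1) (by omega) hn₀
        have hne : T 0 n ≠ T 0 (n + 1) := fun h => by
          have := (hT.eq_of_apply_eq hl.1 hn₀ h).2
          omega
        omega
    intro j hj
    rcases Nat.lt_succ_iff_lt_or_eq.1 hj with hj | rfl
    · exact ih j hj
    · exact ⟨hn₀, by omega⟩

end IsSYT

section DropFirstRow

variable {a m k : ℕ} {rest : List ℕ} {T : Filling}

theorem HasInitialFirstRow.apply_le (hrow : HasInitialFirstRow a T) {j : ℕ}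
    (h : InShape (a :: rest) 0 j) : T 0 j ≤ a := by
  have := inShape_cons_zero.1 h
  rw [hrow j this]
  omega

theorem IsSYT.lt_apply_succ (hT : IsSYT (a :: rest) m T) (hrow : HasInitialFirstRow a T)
    {i j : ℕ} (h : InShape (a :: rest) (i + 1) j) : a < T (i + 1) j := by
  by_contra hle
  have hpos := hT.1.2.1 _ _ h
  have h₀ : InShape (a :: rest) 0 (T (i + 1) j - 1) := inShape_cons_zero.2 (by omega)
  have := hT.eq_of_apply_eq h₀ h (by rw [hrow _ (inShape_cons_zero.1 h₀)]; omega)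
  omega

theorem isSYT_dropFirstRow (hT : IsSYT (a :: rest) m T) (hrow : HasInitialFirstRow a T) :
    IsSYT rest (m - a) (dropFirstRow a T) := by
  have hlt := fun {i j} h => hT.lt_apply_succ hrow (i := i) (j := j) (inShape_cons_succ.2 h)
  refine ⟨⟨fun i j h => ?_, fun i j h => ?_, fun i j₁ j₂ hj h => ?_, fun i₁ i₂ j hi h => ?_⟩,
    fun i j => Nat.sub_le_sub_right (hT.2.1 _ _) a, fun k hk₁ hk => ?_⟩
  · simp [dropFirstRow, hT.1.1 (i + 1) j (mt inShape_cons_succ.1 h)]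
  · have := hlt h
    simp only [dropFirstRow]
    omega
  · exact Nat.sub_le_sub_right (hT.1.2.2.1 _ _ _ hj (inShape_cons_succ.2 h)) a
  · have := hT.1.2.2.2 (i₁ + 1) (i₂ + 1) j (by omega) (inShape_cons_succ.2 h)
    have := hlt h
    simp only [dropFirstRow]
    omega
  · obtain ⟨i, j, h, hv⟩ := hT.exists_inShape_apply_eq (k := k + a) (by omega) (by omega)
    rcases i with _ | i
    · have := hrow.apply_le h
      omega
    refine ⟨(i, j), ⟨inShape_cons_succ.1 h, by simp [dropFirstRow, hv]⟩, ?_⟩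
    rintro ⟨i', j'⟩ ⟨h', hv'⟩
    dsimp only [dropFirstRow] at h' hv'
    have := hlt h'
    have := hT.eq_of_apply_eq (inShape_cons_succ.2 h') h (by omega)
    simp only [Prod.mk.injEq]
    omega

theorem IsSYT.isDescent_dropFirstRow_iff (hT : IsSYT (a :: rest) m T)
    (hrow : HasInitialFirstRow a T) (hk : 1 ≤ k) :
    IsDescent rest (dropFirstRow a T) k ↔ IsDescent (a :: rest) T (k + a) := by
  constructor
  · rintro ⟨i₁, j₁, i₂, j₂, h₁, h₂, hv₁, hv₂, hi⟩
    have := hT.lt_apply_succ hrow (inShape_cons_succ.2 h₁)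
    have := hT.lt_apply_succ hrow (inShape_cons_succ.2 h₂)
    simp only [dropFirstRow] at hv₁ hv₂
    exact ⟨i₁ + 1, j₁, i₂ + 1, j₂, inShape_cons_succ.2 h₁, inShape_cons_succ.2 h₂,
      by omega, by omega, by omega⟩
  · rintro ⟨_ | i₁, j₁, _ | i₂, j₂, h₁, h₂, hv₁, hv₂, hi⟩
    · omega
    · have := hrow.apply_le h₁
      omega
    · omega
    · exact ⟨i₁, j₁, i₂, j₂, inShape_cons_succ.1 h₁, inShape_cons_succ.1 h₂,
        by simp [dropFirstRow, hv₁], by simp [dropFirstRow, hv₂]; omega, by omega⟩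

theorem IsSYT.not_isDescent_of_lt (hT : IsSYT (a :: rest) m T) (hrow : HasInitialFirstRow a T)
    (hk : k < a) : ¬ IsDescent (a :: rest) T k := by
  rintro ⟨i₁, j₁, _ | i₂, j₂, h₁, h₂, hv₁, hv₂, hi⟩
  · omega
  · have := hT.lt_apply_succ hrow h₂
    omega

theorem IsSYT.isDescent_of_hasInitialFirstRow (hT : IsSYT (a :: rest) m T)
    (hrow : HasInitialFirstRow a T) (ha : 0 < a) (ham : a < m) : IsDescent (a :: rest) T a := by
  obtain ⟨_ | i, j, h, hv⟩ := hT.exists_inShape_apply_eq (k := a + 1) (by omega) ham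
  · have := hrow.apply_le h
    omega
  · exact ⟨0, a - 1, i + 1, j, inShape_cons_zero.2 (by omega), h,
      by rw [hrow _ (by omega)]; omega, hv, by omega⟩

theorem IsSYT.descentList_eq_cons (hT : IsSYT (a :: rest) m T) (hrow : HasInitialFirstRow a T)
    (ha : 0 < a) (ham : a < m) :
    descentList (a :: rest) m T =
      a :: (descentList rest (m - a) (dropFirstRow a T)).map (· + a) := by
  set L := a :: (descentList rest (m - a) (dropFirstRow a T)).map (· + a)
  have hL : L.Pairwise (· < ·) := by
    refine List.pairwise_cons.2 ⟨fun x hx => ?_, List.pairwise_map.2 ?_⟩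
    · obtain ⟨d, hd, rfl⟩ := List.mem_map.1 hx
      have := (mem_descentList.1 hd).1.1
      omega
    · exact descentList_pairwise_lt.imp fun h => by omega
  have hmem : ∀ k, k ∈ L ↔ (1 ≤ k ∧ k < m) ∧ IsDescent (a :: rest) T k := by
    intro k
    simp only [L, List.mem_cons, List.mem_map, mem_descentList]
    constructor
    · rintro (rfl | ⟨d, ⟨hd, hdes⟩, rfl⟩)
      · exact ⟨⟨ha, ham⟩, hT.isDescent_of_hasInitialFirstRow hrow ha ham⟩
      · exact ⟨by omega, (hT.isDescent_dropFirstRow_iff hrow hd.1).1 hdes⟩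
    · rintro ⟨hk, hdes⟩
      rcases lt_trichotomy k a with hlt | rfl | hgt
      · exact absurd hdes (hT.not_isDescent_of_lt hrow hlt)
      · exact Or.inl rfl
      · refine Or.inr ⟨k - a, ⟨by omega, ?_⟩, by omega⟩
        rw [hT.isDescent_dropFirstRow_iff hrow (by omega), Nat.sub_add_cancel hgt.le]
        exact hdes
  rw [descentList, ← (List.toFinset_sort (· ≤ ·) hL.nodup).2 (hL.imp le_of_lt)]
  congr 1
  ext k
  simp only [List.mem_toFinset, hmem, Finset.mem_filter, Finset.mem_Ico]

theorem IsSYT.desComp_eq_cons (hT : IsSYT (a :: rest) m T) (hrow : HasInitialFirstRow a T)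
    (ha : 0 < a) (ham : a ≤ m) :
    desComp (a :: rest) m T = a :: desComp rest (m - a) (dropFirstRow a T) := by
  rcases ham.lt_or_eq with ham | rfl
  · rw [desComp, if_neg (by omega), desComp, if_neg (by omega),
      hT.descentList_eq_cons hrow ha ham]
    set D := descentList rest (m - a) (dropFirstRow a T)
    have hm : m = m - a + a := by omega
    have hshift : D.map (· + a) ++ [m] = (D ++ [m - a]).map (· + a) := by
      rw [List.map_append, List.map_singleton, ← hm]
    simp only [List.cons_append, List.zipWith_cons_cons, hshift, Nat.sub_zero]
    rw [show a :: D.map (· + a) = (0 :: D).map (· + a) by simp, List.zipWith_map]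
    simp only [Nat.add_sub_add_right]
  · have hD : descentList (a :: rest) a T = [] := List.eq_nil_iff_forall_not_mem.2
      fun k hk => hT.not_isDescent_of_lt hrow (mem_descentList.1 hk).1.2 (mem_descentList.1 hk).2
    simp [desComp, hD, ha.ne']

end DropFirstRow

section AddFirstRow

variable {a m : ℕ} {rest : List ℕ} {T : Filling}

theorem hasInitialFirstRow_addFirstRow : HasInitialFirstRow a (addFirstRow a rest T) :=
  fun j hj => by simp [addFirstRow, hj]

theorem dropFirstRow_addFirstRow (hT : ∀ i j, ¬ InShape rest i j → T i j = 0) :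
    dropFirstRow a (addFirstRow a rest T) = T := by
  funext i j
  by_cases h : InShape rest i j <;> simp [dropFirstRow, addFirstRow, h, hT]

theorem IsSYT.addFirstRow_dropFirstRow (hT : IsSYT (a :: rest) m T)
    (hrow : HasInitialFirstRow a T) : addFirstRow a rest (dropFirstRow a T) = T := by
  funext i j
  rcases i with _ | i
  · by_cases hj : j < a
    · simp [addFirstRow, hj, hrow j hj]
    · simp [addFirstRow, hj, hT.1.1 0 j (by simpa using hj)]
  · by_cases h : InShape rest i j
    · have := hT.lt_apply_succ hrow (inShape_cons_succ.2 h)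
      simp only [addFirstRow, dropFirstRow, if_pos h]
      omega
    · simp [addFirstRow, h, hT.1.1 (i + 1) j (by simpa using h)]

theorem isSSYT_addFirstRow (hlam : (a :: rest).Pairwise (· ≥ ·)) (hT : IsSSYT rest T) :
    IsSSYT (a :: rest) (addFirstRow a rest T) := by
  refine ⟨fun i j h => ?_, fun i j h => ?_, fun i j₁ j₂ hj h => ?_, fun i₁ i₂ j hi h => ?_⟩
  · rcases i with _ | i <;> simp_all [addFirstRow]
  · rcases i with _ | i
    · simp_all [addFirstRow]
    · simp only [inShape_cons_succ] at h
      have := hT.2.1 i j h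
      simp only [addFirstRow, if_pos h]
      omega
  · rcases i with _ | i
    · simp only [inShape_cons_zero] at h
      simp only [addFirstRow, if_pos h, if_pos (lt_of_le_of_lt hj h)]
      omega
    · simp only [inShape_cons_succ] at h
      have := hT.2.2.1 i j₁ j₂ hj h
      have h₁ : InShape rest i j₁ := ⟨h.1, lt_of_le_of_lt hj h.2⟩
      simp only [addFirstRow, if_pos h, if_pos h₁]
      omega
  · obtain ⟨i₂, rfl⟩ : ∃ i, i₂ = i + 1 := ⟨i₂ - 1, by omega⟩
    simp only [inShape_cons_succ] at h
    have hpos := hT.2.1 i₂ j h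
    rcases i₁ with _ | i₁
    · have : j < a := lt_of_lt_of_le h.2 (getD_le_of_pairwise_cons hlam)
      simp only [addFirstRow, if_pos this, if_pos h]
      omega
    · have := hT.2.2.2 i₁ i₂ j (by omega) h
      simp only [addFirstRow, if_pos h]
      split_ifs <;> omega

theorem isSYT_addFirstRow (hlam : (a :: rest).Pairwise (· ≥ ·)) (ham : a ≤ m)
    (hT : IsSYT rest (m - a) T) : IsSYT (a :: rest) m (addFirstRow a rest T) := by
  refine ⟨isSSYT_addFirstRow hlam hT.1, fun i j => ?_, fun k hk₁ hk => ?_⟩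
  · rcases i with _ | i
    · simp only [addFirstRow]
      split_ifs <;> omega
    · have := hT.2.1 i j
      simp only [addFirstRow]
      split_ifs <;> omega
  · by_cases hka : k ≤ a
    · refine ⟨(0, k - 1), ⟨inShape_cons_zero.2 (by omega), by
      simp only [addFirstRow, if_pos (show k - 1 < a by omega)]
      omega⟩, ?_⟩
      rintro ⟨_ | i, j⟩ ⟨h, hv⟩
      · simp_all [addFirstRow]
        omega
      · simp only [inShape_cons_succ] at h
        have := hT.1.2.1 i j h
        simp only [addFirstRow, if_pos h] at hv
        omega
    · obtain ⟨c, ⟨hc, hcv⟩, hu⟩ := hT.2.2 (k - a) (by omega) (by omega)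
      refine ⟨(c.1 + 1, c.2), ⟨inShape_cons_succ.2 hc, ?_⟩, ?_⟩
      · simp only [addFirstRow, if_pos hc]
        omega
      · rintro ⟨_ | i, j⟩ ⟨h, hv⟩
        · simp_all [addFirstRow]
          omega
        · simp only [inShape_cons_succ] at h
          simp only [addFirstRow, if_pos h] at hv
          rw [← hu (i, j) ⟨h, show T i j = k - a by omega⟩]

end AddFirstRow

section Main

variable {a m : ℕ} {lam rest : List ℕ} {T S : Filling}

theorem IsSYT.desComp_cons_cases (hlam : IsPartitionOf m (a :: rest))
    (hT : IsSYT (a :: rest) m T) :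
    ∃ α tl, desComp (a :: rest) m T = α :: tl ∧ α ≤ a ∧
      (α = a → HasInitialFirstRow a T ∧ tl = desComp rest (m - a) (dropFirstRow a T)) := by
  obtain ⟨ha, ham, -⟩ := hlam.of_cons
  obtain ⟨α, tl, hα, hα₁, hαm, hdes⟩ := exists_desComp_eq_cons (lam := a :: rest) (m := m) (T := T)
    (by omega)
  have hrow := hT.firstRow_of_forall_not_isDescent hlam.1 hαm hdes
  refine ⟨α, tl, hα, ?_, ?_⟩
  · have := inShape_cons_zero.1 (hrow (α - 1) (by omega)).1
    omega
  · rintro rfl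
    have hinit : HasInitialFirstRow α T := fun j hj => (hrow j hj).2
    refine ⟨hinit, ?_⟩
    have := hT.desComp_eq_cons hinit ha hαm
    rw [hα] at this
    exact (List.cons.inj this).2

theorem IsSYT.lexLe_desComp (hlam : IsPartitionOf m lam) (hT : IsSYT lam m T) :
    lexLe (desComp lam m T) lam := by
  induction lam generalizing m T with
  | nil =>
    have hm : m = 0 := hlam.2.2.symm
    exact Or.inl (by rw [desComp, if_pos hm])
  | cons a rest ih =>
    obtain ⟨α, tl, hα, hαa, htl⟩ := hT.desComp_cons_cases hlam
    rw [hα]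
    rcases hαa.lt_or_eq with hlt | rfl
    · exact Or.inr (List.Lex.rel hlt)
    · obtain ⟨hrow, rfl⟩ := htl rfl
      rcases ih hlam.of_cons.2.2 (isSYT_dropFirstRow hT hrow) with h | h
      · exact Or.inl (congrArg _ h)
      · exact Or.inr (List.Lex.cons h)

theorem IsSYT.eq_of_desComp_eq (hlam : IsPartitionOf m lam) (hT : IsSYT lam m T)
    (hS : IsSYT lam m S) (hTd : desComp lam m T = lam) (hSd : desComp lam m S = lam) :
    T = S := by
  induction lam generalizing m T S with
  | nil =>
    funext i j
    rw [hT.1.1 i j (by simp [InShape]), hS.1.1 i j (by simp [InShape])]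
  | cons a rest ih =>
    obtain ⟨α, tl, hα, -, htl⟩ := hT.desComp_cons_cases hlam
    obtain ⟨β, tl', hβ, -, htl'⟩ := hS.desComp_cons_cases hlam
    obtain ⟨rfl, rfl⟩ := List.cons.inj (hTd.symm.trans hα)
    obtain ⟨rfl, rfl⟩ := List.cons.inj (hSd.symm.trans hβ)
    obtain ⟨hrowT, hT'⟩ := htl rfl
    obtain ⟨hrowS, hS'⟩ := htl' rfl
    rw [← hT.addFirstRow_dropFirstRow hrowT, ← hS.addFirstRow_dropFirstRow hrowS,
      ih hlam.of_cons.2.2 (isSYT_dropFirstRow hT hrowT) (isSYT_dropFirstRow hS hrowS)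
        hT'.symm hS'.symm]

theorem exists_isSYT_desComp_eq (hlam : IsPartitionOf m lam) :
    ∃ T, IsSYT lam m T ∧ desComp lam m T = lam := by
  induction lam generalizing m with
  | nil =>
    obtain rfl : m = 0 := hlam.2.2.symm
    refine ⟨fun _ _ => 0, ?_, by simp [desComp]⟩
    refine ⟨⟨fun _ _ _ => rfl, ?_, ?_, ?_⟩, fun _ _ => le_rfl, fun k hk₁ hk => by omega⟩ <;>
      simp [InShape]
  | cons a rest ih =>
    obtain ⟨ha, ham, hrest⟩ := hlam.of_cons
    obtain ⟨T, hT, hTd⟩ := ih hrest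
    have hT' := isSYT_addFirstRow hlam.1 ham hT
    refine ⟨addFirstRow a rest T, hT', ?_⟩
    rw [hT'.desComp_eq_cons hasInitialFirstRow_addFirstRow ha ham,
      dropFirstRow_addFirstRow hT.1.1, hTd]

end Main

/-- Every standard Young tableau of shape `lam ⊢ m` has descent composition at most `lam`
in the lexicographic order, and exactly one standard Young tableau of shape `lam` has
descent composition equal to `lam`. -/
theorem desComp_lex_le_shape_and_unique_max (m : ℕ) (lam : List ℕ)
    (hlam : IsPartitionOf m lam) :
    (∀ T : Filling, IsSYT lam m T → lexLe (desComp lam m T) lam) ∧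
    (∃! T : Filling, IsSYT lam m T ∧ desComp lam m T = lam) := by
  obtain ⟨T₀, hT₀, hT₀d⟩ := exists_isSYT_desComp_eq hlam
  exact ⟨fun T hT => hT.lexLe_desComp hlam,
    T₀, ⟨hT₀, hT₀d⟩, fun T hT => hT.1.eq_of_desComp_eq hlam hT₀ hT.2 hT₀d⟩

end QC
end

section
/- Let λ be a partition of m and n ≥ 1. Then, as polynomials in x_1,…,x_n, the Schur polynomial s_λ(x_1,…,x_n) = Σ_{T ∈ SSYT(λ)_n} x_1^{γ_1}⋯x_n^{γ_n} (where (γ_1,…,γ_n) = wt(T)) equals Σ_{T₀ ∈ SYT(λ)} F_{DesComp(T₀)}(x_1,…,x_n), the sum of fundamental quasisymmetric polynomials over all standard Young tableaux of shape λ. -/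
/-!
Standardization `T ↦ stdize T` lists the cells of a semistandard tableau by increasing entry,
equal entries from left to right; since equal entries form a horizontal strip, the resulting
standard tableau has no descent inside a block of equal entries. Hence the word `f` of entries read
in this order is weakly increasing and strictly increasing at every descent of `stdize T`, i.e. it
is one of the words summed in `F_{DesComp(stdize T)}`. Conversely, writing such a word into a
standard tableau `T₀` (`destandardize`) gives a semistandard tableau, because two cells of a column
are separated by a descent of `T₀`, and its standardization is `T₀` again. This weight-preserving
bijection between semistandard tableaux and pairs `(T₀, f)` is the identity.
-/

open scoped Classical

namespace QC

lemma mem_cells {lam : List ℕ} {c : ℕ × ℕ} : c ∈ cells lam ↔ InShape lam c.1 c.2 := by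
  obtain ⟨i, j⟩ := c
  simp [cells, InShape, and_comm]

lemma card_cells (lam : List ℕ) : (cells lam).card = lam.sum := by
  rw [cells, Finset.card_biUnion fun i _ i' _ h => by
    simp only [Finset.disjoint_left, Finset.mem_product, Finset.mem_singleton]
    rintro c ⟨rfl, -⟩ ⟨h', -⟩
    exact h h']
  simp [Finset.sum_range, Fin.sum_univ_getElem]

lemma InShape.of_le {lam : List ℕ} (hs : lam.Pairwise (· ≥ ·)) {i j i' j' : ℕ}
    (h : InShape lam i j) (hi : i' ≤ i) (hj : j' ≤ j) : InShape lam i' j' := by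
  obtain ⟨hi_len, hj_len⟩ := h
  have hi'_len : i' < lam.length := hi.trans_lt hi_len
  refine ⟨hi'_len, hj.trans_lt (hj_len.trans_le ?_)⟩
  rw [List.getD_eq_getElem _ _ hi_len, List.getD_eq_getElem _ _ hi'_len]
  rcases hi.eq_or_lt with rfl | hlt
  · exact le_rfl
  · exact List.pairwise_iff_getElem.mp hs i' i hi'_len hi_len hlt

namespace IsSSYT

variable {lam : List ℕ} {T : Filling}

lemma le_of_le (hs : lam.Pairwise (· ≥ ·)) (hT : IsSSYT lam T) {i j i' j' : ℕ}
    (h : InShape lam i j) (hi : i' ≤ i) (hj : j' ≤ j) : T i' j' ≤ T i j := by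
  have hrow : T i' j' ≤ T i' j := hT.2.2.1 i' j' j hj (h.of_le hs hi le_rfl)
  rcases hi.eq_or_lt with rfl | hlt
  · exact hrow
  · exact (hrow.trans_lt (hT.2.2.2 i' i j hlt h)).le

lemma lt_of_lt_of_le (hs : lam.Pairwise (· ≥ ·)) (hT : IsSSYT lam T) {i j i' j' : ℕ}
    (h : InShape lam i j) (hi : i' < i) (hj : j' ≤ j) : T i' j' < T i j :=
  (hT.2.2.1 i' j' j hj (h.of_le hs hi.le le_rfl)).trans_lt (hT.2.2.2 i' i j hi h)

end IsSSYT

section KeyRank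

variable {α β : Type*} [LinearOrder β] (s : Finset α) (key : α → β)

def keyRank (a : α) : ℕ := (s.filter fun x => key x ≤ key a).card

variable {s key}

lemma keyRank_lt_keyRank {a b : α} (hb : b ∈ s) (h : key a < key b) :
    keyRank s key a < keyRank s key b :=
  Finset.card_lt_card <| (Finset.ssubset_iff_of_subset
    (Finset.monotone_filter_right _ fun _ _ hx => hx.trans h.le)).mpr
    ⟨b, by simp [hb], by simp [h]⟩

lemma keyRank_le_keyRank_iff {a b : α} (ha : a ∈ s) :
    keyRank s key a ≤ keyRank s key b ↔ key a ≤ key b := by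
  refine ⟨fun h => not_lt.mp fun hlt => (keyRank_lt_keyRank ha hlt).not_ge h, fun h => ?_⟩
  exact Finset.card_le_card (Finset.monotone_filter_right _ fun _ _ hx => hx.trans h)

lemma keyRank_mem_Icc {a : α} (ha : a ∈ s) : keyRank s key a ∈ Finset.Icc 1 s.card :=
  Finset.mem_Icc.mpr ⟨Finset.card_pos.mpr ⟨a, by simp [ha]⟩, Finset.card_filter_le _ _⟩

lemma injOn_keyRank (hkey : Set.InjOn key s) : Set.InjOn (keyRank s key) s :=
  fun _ ha _ hb h => hkey ha hb <| le_antisymm ((keyRank_le_keyRank_iff ha).mp h.le)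
    ((keyRank_le_keyRank_iff hb).mp h.ge)

lemma image_keyRank (hkey : Set.InjOn key s) : s.image (keyRank s key) = Finset.Icc 1 s.card :=
  Finset.eq_of_subset_of_card_le
    (Finset.image_subset_iff.mpr fun _ => keyRank_mem_Icc)
    (by rw [Finset.card_image_of_injOn (injOn_keyRank hkey), Nat.card_Icc, Nat.add_sub_cancel])

lemma keyRank_eq_self {key : α → ℕ} (hkey : Set.InjOn key s)
    (himage : s.image key = Finset.Icc 1 s.card) {a : α} (ha : a ∈ s) :
    keyRank s key a = key a := by
  have hka : key a ≤ s.card := (Finset.mem_Icc.mp (himage ▸ Finset.mem_image_of_mem key ha)).2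
  rw [keyRank, ← Finset.card_image_of_injOn (hkey.mono (Finset.filter_subset _ _)),
    ← Finset.filter_image (p := (· ≤ key a)), himage]
  rw [show (Finset.Icc 1 s.card).filter (· ≤ key a) = Finset.Icc 1 (key a) by
    ext x; simp only [Finset.mem_filter, Finset.mem_Icc]; omega]
  simp

end KeyRank

namespace IsSYT

variable {lam : List ℕ} {m : ℕ} {T : Filling}

lemma exists_cell (hT : IsSYT lam m T) {k : ℕ} (h1 : 1 ≤ k) (h2 : k ≤ m) :
    ∃ c ∈ cells lam, T c.1 c.2 = k :=
  let ⟨c, ⟨hc, hk⟩, _⟩ := hT.2.2 k h1 h2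
  ⟨c, mem_cells.mpr hc, hk⟩

lemma sub_one_lt (hT : IsSYT lam m T) {i j : ℕ} (h : InShape lam i j) : T i j - 1 < m := by
  have := hT.1.2.1 i j h
  have := hT.2.1 i j
  omega

lemma injOn (hT : IsSYT lam m T) : Set.InjOn (fun c : ℕ × ℕ => T c.1 c.2) (cells lam) := by
  intro c hc c' hc' h
  obtain ⟨_, _, huniq⟩ := hT.2.2 (T c.1 c.2) (hT.1.2.1 _ _ (mem_cells.mp hc)) (hT.2.1 _ _)
  exact (huniq c ⟨mem_cells.mp hc, rfl⟩).trans (huniq c' ⟨mem_cells.mp hc', h.symm⟩).symm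

lemma image_eq (hT : IsSYT lam m T) :
    (cells lam).image (fun c : ℕ × ℕ => T c.1 c.2) = Finset.Icc 1 m := by
  ext k
  simp only [Finset.mem_image, Finset.mem_Icc]
  constructor
  · rintro ⟨c, hc, rfl⟩
    exact ⟨hT.1.2.1 _ _ (mem_cells.mp hc), hT.2.1 _ _⟩
  · rintro ⟨h1, h2⟩
    exact hT.exists_cell h1 h2

lemma card_cells_eq (hT : IsSYT lam m T) : (cells lam).card = m := by
  rw [← Finset.card_image_of_injOn hT.injOn, hT.image_eq, Nat.card_Icc, Nat.add_sub_cancel]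

lemma keyRank_eq (hT : IsSYT lam m T) {c : ℕ × ℕ} (hc : c ∈ cells lam) :
    keyRank (cells lam) (fun c : ℕ × ℕ => T c.1 c.2) c = T c.1 c.2 :=
  keyRank_eq_self hT.injOn (by rw [hT.card_cells_eq, hT.image_eq]) hc

lemma row_le_of_forall_not_isDescent (hT : IsSYT lam m T) {c c' : ℕ × ℕ}
    (hc : c ∈ cells lam) (hc' : c' ∈ cells lam) (hle : T c.1 c.2 ≤ T c'.1 c'.2)
    (hnd : ∀ d, T c.1 c.2 ≤ d → d < T c'.1 c'.2 → ¬ IsDescent lam T d) : c'.1 ≤ c.1 := by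
  suffices hchain : ∀ v, T c.1 c.2 ≤ v → ∀ c' ∈ cells lam, T c'.1 c'.2 = v →
      (∀ d, T c.1 c.2 ≤ d → d < v → ¬ IsDescent lam T d) → c'.1 ≤ c.1 from
    hchain _ hle c' hc' rfl hnd
  intro v hcv
  induction v, hcv using Nat.le_induction with
  | base => exact fun c' hc' hv _ => (hT.injOn hc' hc hv) ▸ le_rfl
  | succ v hcv ih =>
    intro c' hc' hv hnd
    have hv1 : 1 ≤ v := (hT.1.2.1 _ _ (mem_cells.mp hc)).trans_le hcv
    obtain ⟨c'', hc'', hv''⟩ := hT.exists_cell hv1 (by have := hT.2.1 c'.1 c'.2; omega)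
    have hrow := ih c'' hc'' hv'' fun d h1 h2 => hnd d h1 (by omega)
    by_contra! hlt
    exact hnd v hcv (by omega)
      ⟨_, _, _, _, mem_cells.mp hc'', mem_cells.mp hc', hv'', hv, by omega⟩

lemma col_lt_of_forall_not_isDescent (hs : lam.Pairwise (· ≥ ·)) (hT : IsSYT lam m T)
    {c c' : ℕ × ℕ} (hc : c ∈ cells lam) (hc' : c' ∈ cells lam)
    (hlt : T c.1 c.2 < T c'.1 c'.2)
    (hnd : ∀ d, T c.1 c.2 ≤ d → d < T c'.1 c'.2 → ¬ IsDescent lam T d) : c.2 < c'.2 := by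
  by_contra! hcol
  have hrow := hT.row_le_of_forall_not_isDescent hc hc' hlt.le hnd
  exact (hT.1.le_of_le hs (mem_cells.mp hc) hrow hcol).not_gt hlt

end IsSYT

lemma isSYT_of_injOn {lam : List ℕ} {m : ℕ} {T : Filling} (hT : IsSSYT lam T)
    (hinj : Set.InjOn (fun c : ℕ × ℕ => T c.1 c.2) (cells lam))
    (himage : (cells lam).image (fun c : ℕ × ℕ => T c.1 c.2) = Finset.Icc 1 m) :
    IsSYT lam m T := by
  have hmem : ∀ c ∈ cells lam, T c.1 c.2 ∈ Finset.Icc 1 m :=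
    fun c hc => himage ▸ Finset.mem_image_of_mem _ hc
  refine ⟨hT, fun i j => ?_, fun k h1 h2 => ?_⟩
  · by_cases h : InShape lam i j
    · exact (Finset.mem_Icc.mp (hmem (i, j) (mem_cells.mpr h))).2
    · rw [hT.1 i j h]; exact Nat.zero_le m
  · obtain ⟨c, hc, hk⟩ := Finset.mem_image.mp (himage ▸ Finset.mem_Icc.mpr ⟨h1, h2⟩ :
      k ∈ (cells lam).image (fun c : ℕ × ℕ => T c.1 c.2))
    exact ⟨c, ⟨mem_cells.mp hc, hk⟩, fun c' hc' =>
      hinj (mem_cells.mpr hc'.1) hc (hc'.2.trans hk.symm)⟩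

def stdKey (T : Filling) (c : ℕ × ℕ) : ℕ ×ₗ ℕ := toLex (T c.1 c.2, c.2)

section Stdize

variable {lam : List ℕ} {T : Filling}

lemma stdize_of_inShape {i j : ℕ} (h : InShape lam i j) :
    stdize lam T i j = keyRank (cells lam) (stdKey T) (i, j) := by
  simp only [stdize, if_pos h, keyRank, stdKey, Prod.Lex.toLex_le_toLex]

lemma stdize_le_stdize_iff {c c' : ℕ × ℕ} (hc : c ∈ cells lam) (hc' : c' ∈ cells lam) :
    stdize lam T c.1 c.2 ≤ stdize lam T c'.1 c'.2 ↔ stdKey T c ≤ stdKey T c' := by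
  rw [stdize_of_inShape (mem_cells.mp hc), stdize_of_inShape (mem_cells.mp hc')]
  exact keyRank_le_keyRank_iff hc

lemma IsSSYT.injOn_stdKey (hT : IsSSYT lam T) : Set.InjOn (stdKey T) (cells lam) := by
  rintro ⟨i, j⟩ hc ⟨i', j'⟩ hc' h
  obtain ⟨hv, rfl⟩ : T i j = T i' j' ∧ j = j' := by simpa [stdKey] using h
  rcases lt_trichotomy i i' with hi | rfl | hi
  · exact absurd hv (hT.2.2.2 i i' j hi (mem_cells.mp hc')).ne
  · rfl
  · exact absurd hv (hT.2.2.2 i' i j hi (mem_cells.mp hc)).ne'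

lemma isSYT_stdize {m : ℕ} (hlam : IsPartitionOf m lam) (hT : IsSSYT lam T) :
    IsSYT lam m (stdize lam T) := by
  have hEqOn : Set.EqOn (fun c : ℕ × ℕ => stdize lam T c.1 c.2)
      (keyRank (cells lam) (stdKey T)) (cells lam) :=
    fun c hc => stdize_of_inShape (mem_cells.mp hc)
  refine isSYT_of_injOn ⟨fun i j h => by simp [stdize, h], fun i j h => ?_, ?_, ?_⟩
    ((injOn_keyRank hT.injOn_stdKey).congr hEqOn.symm) ?_
  · rw [stdize_of_inShape h]
    exact (Finset.mem_Icc.mp (keyRank_mem_Icc (mem_cells.mpr h))).1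
  · intro i j1 j2 hj h2
    have h1 : InShape lam i j1 := ⟨h2.1, hj.trans_lt h2.2⟩
    refine (stdize_le_stdize_iff (c := (i, j1)) (c' := (i, j2)) (mem_cells.mpr h1)
      (mem_cells.mpr h2)).mpr ?_
    simpa [stdKey, Prod.Lex.toLex_le_toLex, hj] using (hT.2.2.1 i j1 j2 hj h2).lt_or_eq
  · intro i1 i2 j hi h2
    have h1 : InShape lam i1 j := h2.of_le hlam.1 hi.le le_rfl
    rw [stdize_of_inShape h1, stdize_of_inShape h2]
    refine keyRank_lt_keyRank (mem_cells.mpr h2) ?_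
    simpa [stdKey, Prod.Lex.toLex_lt_toLex] using hT.2.2.2 i1 i2 j hi h2
  · rw [Finset.image_congr hEqOn, image_keyRank hT.injOn_stdKey, card_cells, hlam.2.2]

lemma le_of_stdize_le {c c' : ℕ × ℕ} (hc : c ∈ cells lam) (hc' : c' ∈ cells lam)
    (h : stdize lam T c.1 c.2 ≤ stdize lam T c'.1 c'.2) : T c.1 c.2 ≤ T c'.1 c'.2 :=
  Prod.Lex.monotone_fst _ _ ((stdize_le_stdize_iff hc hc').mp h)

lemma IsSSYT.lt_of_stdize_lt_of_row_lt (hs : lam.Pairwise (· ≥ ·)) (hT : IsSSYT lam T)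
    {c c' : ℕ × ℕ} (hc : c ∈ cells lam) (hc' : c' ∈ cells lam)
    (h : stdize lam T c.1 c.2 < stdize lam T c'.1 c'.2) (hrow : c.1 < c'.1) :
    T c.1 c.2 < T c'.1 c'.2 := by
  have hkey : stdKey T c < stdKey T c' :=
    lt_of_not_ge fun hle => h.not_ge ((stdize_le_stdize_iff hc' hc).mpr hle)
  rcases Prod.Lex.toLex_lt_toLex.mp hkey with hlt | ⟨-, hcol⟩
  · exact hlt
  · exact hT.lt_of_lt_of_le hs (mem_cells.mp hc') hrow hcol.le

end Stdize

lemma innerSums_cons {a : ℕ} {l : List ℕ} (hl : l ≠ []) :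
    innerSums (a :: l) = a :: (innerSums l).map (a + ·) := by
  obtain ⟨b, l, rfl⟩ := List.exists_cons_of_ne_nil hl
  simp [innerSums, List.range_succ_eq_map, Function.comp_def]

lemma innerSums_zipWith_sub {m : ℕ} :
    ∀ {l : List ℕ} {p : ℕ}, (p :: l).Pairwise (· < ·) →
      innerSums (List.zipWith (· - ·) (l ++ [m]) (p :: l)) = l.map (· - p)
  | [], _, _ => by simp [innerSums]
  | d :: l, p, h => by
    obtain ⟨hp, hd⟩ := List.pairwise_cons.mp h
    have hdl : ∀ x ∈ l, d < x := (List.pairwise_cons.mp hd).1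
    rw [List.cons_append, List.zipWith_cons_cons, innerSums_cons (by simp),
      innerSums_zipWith_sub hd, List.map_map, List.map_cons]
    congr 1
    refine List.map_congr_left fun x hx => ?_
    have := hp d List.mem_cons_self
    have := hdl x hx
    simp only [Function.comp_apply]
    omega

lemma mem_innerSums_desComp {lam : List ℕ} {m : ℕ} {T : Filling} {k : ℕ} :
    k ∈ innerSums (desComp lam m T) ↔ k ∈ Finset.Ico 1 m ∧ IsDescent lam T k := by
  rcases Nat.eq_zero_or_pos m with rfl | hm
  · simp [desComp, innerSums]
  have hsorted : (0 :: descentList lam m T).Pairwise (· < ·) := by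
    refine List.pairwise_cons.mpr ⟨fun x hx => ?_, (Finset.sortedLT_sort _).pairwise⟩
    simp only [descentList, Finset.mem_sort, Finset.mem_filter, Finset.mem_Ico] at hx
    omega
  rw [desComp, if_neg hm.ne', innerSums_zipWith_sub hsorted]
  simp [descentList]

lemma isFWord_desComp_iff {lam : List ℕ} {m n : ℕ} {T : Filling} {f : Fin m → Fin n} :
    IsFWord m n (desComp lam m T) f ↔ Monotone f ∧
      ∀ (t : ℕ) (ht : t + 1 < m), IsDescent lam T (t + 1) → f ⟨t, by omega⟩ < f ⟨t + 1, ht⟩ := by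
  simp only [IsFWord, mem_innerSums_desComp, Finset.mem_Ico]
  exact and_congr_right fun _ => forall₂_congr fun t ht => by simp [ht]

noncomputable def destandardize (lam : List ℕ) (T₀ : Filling) {m n : ℕ} (f : Fin m → Fin n) :
    Filling := fun i j =>
  if h : InShape lam i j ∧ T₀ i j - 1 < m then (f ⟨T₀ i j - 1, h.2⟩ : ℕ) + 1 else 0

section Destandardize

variable {lam : List ℕ} {m n : ℕ} {T₀ : Filling} {f : Fin m → Fin n}

lemma destandardize_of_not_inShape {i j : ℕ} (h : ¬ InShape lam i j) :
    destandardize lam T₀ f i j = 0 := by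
  simp [destandardize, h]

lemma destandardize_of_inShape (hT₀ : IsSYT lam m T₀) {i j : ℕ} (h : InShape lam i j) :
    destandardize lam T₀ f i j = (f ⟨T₀ i j - 1, hT₀.sub_one_lt h⟩ : ℕ) + 1 := by
  simp [destandardize, h, hT₀.sub_one_lt h]

lemma entriesLE_destandardize : EntriesLE n (destandardize lam T₀ f) := by
  intro i j
  unfold destandardize
  split_ifs with h
  · exact f _ |>.isLt
  · exact Nat.zero_le n

lemma destandardize_le_destandardize (hT₀ : IsSYT lam m T₀) (hf : Monotone f) {c c' : ℕ × ℕ}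
    (hc : c ∈ cells lam) (hc' : c' ∈ cells lam) (h : T₀ c.1 c.2 ≤ T₀ c'.1 c'.2) :
    destandardize lam T₀ f c.1 c.2 ≤ destandardize lam T₀ f c'.1 c'.2 := by
  rw [destandardize_of_inShape hT₀ (mem_cells.mp hc), destandardize_of_inShape hT₀ (mem_cells.mp hc')]
  have := hf (Fin.mk_le_mk.mpr (Nat.sub_le_sub_right h 1) :
    (⟨T₀ c.1 c.2 - 1, hT₀.sub_one_lt (mem_cells.mp hc)⟩ : Fin m) ≤
      ⟨T₀ c'.1 c'.2 - 1, hT₀.sub_one_lt (mem_cells.mp hc')⟩)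
  exact Nat.succ_le_succ this

lemma destandardize_lt_of_isDescent (hT₀ : IsSYT lam m T₀)
    (hf : IsFWord m n (desComp lam m T₀) f) {c c' : ℕ × ℕ} (hc : c ∈ cells lam)
    (hc' : c' ∈ cells lam) {d : ℕ} (hd : IsDescent lam T₀ d) (h1 : T₀ c.1 c.2 ≤ d)
    (h2 : d < T₀ c'.1 c'.2) :
    destandardize lam T₀ f c.1 c.2 < destandardize lam T₀ f c'.1 c'.2 := by
  obtain ⟨hmono, hstrict⟩ := isFWord_desComp_iff.mp hf
  have hpos := hT₀.1.2.1 _ _ (mem_cells.mp hc)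
  have hlt' := hT₀.sub_one_lt (mem_cells.mp hc')
  have hjump := hstrict (d - 1) (by omega) (by rwa [Nat.sub_add_cancel (by omega)])
  have hbefore := hmono (Fin.mk_le_mk.mpr (Nat.sub_le_sub_right h1 1) :
    (⟨T₀ c.1 c.2 - 1, hT₀.sub_one_lt (mem_cells.mp hc)⟩ : Fin m) ≤ ⟨d - 1, by omega⟩)
  have hafter := hmono (Fin.mk_le_mk.mpr (by omega) :
    (⟨d - 1 + 1, by omega⟩ : Fin m) ≤ ⟨T₀ c'.1 c'.2 - 1, hlt'⟩)
  rw [destandardize_of_inShape hT₀ (mem_cells.mp hc), destandardize_of_inShape hT₀ (mem_cells.mp hc')]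
  exact Nat.succ_lt_succ (hbefore.trans_lt (hjump.trans_le hafter))

lemma isSSYT_destandardize (hs : lam.Pairwise (· ≥ ·)) (hT₀ : IsSYT lam m T₀)
    (hf : IsFWord m n (desComp lam m T₀) f) : IsSSYT lam (destandardize lam T₀ f) := by
  refine ⟨fun i j h => destandardize_of_not_inShape h,
    fun i j h => by rw [destandardize_of_inShape hT₀ h]; omega, ?_, ?_⟩
  · intro i j1 j2 hj h2
    exact destandardize_le_destandardize hT₀ hf.1 (c := (i, j1)) (c' := (i, j2))
      (mem_cells.mpr ⟨h2.1, hj.trans_lt h2.2⟩) (mem_cells.mpr h2) (hT₀.1.2.2.1 i j1 j2 hj h2)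
  · intro i1 i2 j hi h2
    have hc : (i1, j) ∈ cells lam := mem_cells.mpr (h2.of_le hs hi.le le_rfl)
    have hc' : (i2, j) ∈ cells lam := mem_cells.mpr h2
    have hlt := hT₀.1.2.2.2 i1 i2 j hi h2
    obtain ⟨d, hd1, hd2, hd⟩ : ∃ d, T₀ i1 j ≤ d ∧ d < T₀ i2 j ∧ IsDescent lam T₀ d := by
      by_contra! hnd
      exact (hT₀.row_le_of_forall_not_isDescent hc hc' hlt.le hnd).not_gt hi
    exact destandardize_lt_of_isDescent hT₀ hf hc hc' hd hd1 hd2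

lemma stdKey_destandardize_lt (hs : lam.Pairwise (· ≥ ·)) (hT₀ : IsSYT lam m T₀)
    (hf : IsFWord m n (desComp lam m T₀) f) {c c' : ℕ × ℕ} (hc : c ∈ cells lam)
    (hc' : c' ∈ cells lam) (h : T₀ c.1 c.2 < T₀ c'.1 c'.2) :
    stdKey (destandardize lam T₀ f) c < stdKey (destandardize lam T₀ f) c' := by
  refine Prod.Lex.toLex_lt_toLex.mpr ?_
  rcases (destandardize_le_destandardize hT₀ hf.1 hc hc' h.le).lt_or_eq with hlt | heq
  · exact Or.inl hlt
  · exact Or.inr ⟨heq, hT₀.col_lt_of_forall_not_isDescent (c := c) (c' := c') hs hc hc' h fun d h1 h2 hd =>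
      (destandardize_lt_of_isDescent hT₀ hf hc hc' hd h1 h2).ne heq⟩

lemma stdize_destandardize (hs : lam.Pairwise (· ≥ ·)) (hT₀ : IsSYT lam m T₀)
    (hf : IsFWord m n (desComp lam m T₀) f) : stdize lam (destandardize lam T₀ f) = T₀ := by
  funext i j
  by_cases h : InShape lam i j
  · have hij : (i, j) ∈ cells lam := mem_cells.mpr h
    rw [stdize_of_inShape h, ← hT₀.keyRank_eq hij, keyRank, keyRank]
    congr 1
    refine Finset.filter_congr fun c hc => ⟨fun hle => ?_, fun hle => ?_⟩
    · by_contra! hlt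
      exact (stdKey_destandardize_lt hs hT₀ hf hij hc hlt).not_ge hle
    · rcases hle.lt_or_eq with hlt | heq
      · exact (stdKey_destandardize_lt hs hT₀ hf hc hij hlt).le
      · rw [hT₀.injOn hc hij heq]
  · rw [stdize, if_neg h, hT₀.1.1 i j h]

lemma destandardize_injective (hT₀ : IsSYT lam m T₀) :
    Function.Injective (destandardize lam T₀ : (Fin m → Fin n) → Filling) := by
  intro f f' h
  funext t
  obtain ⟨c, hc, hct⟩ := hT₀.exists_cell (k := t + 1) (by omega) t.isLt
  have := congrFun (congrFun h c.1) c.2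
  rw [destandardize_of_inShape hT₀ (mem_cells.mp hc),
    destandardize_of_inShape hT₀ (mem_cells.mp hc)] at this
  simpa [hct, Fin.ext_iff] using this

end Destandardize

lemma countEq_destandardize {lam : List ℕ} {m n : ℕ} {T₀ : Filling} (hT₀ : IsSYT lam m T₀)
    (f : Fin m → Fin n) (i : Fin n) :
    countEq lam (destandardize lam T₀ f) (i + 1) = (Finset.univ.filter fun t => f t = i).card := by
  refine Finset.card_bij (fun c hc => ⟨T₀ c.1 c.2 - 1,
    hT₀.sub_one_lt (mem_cells.mp (Finset.mem_filter.mp hc).1)⟩) ?_ ?_ ?_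
  · intro c hc
    obtain ⟨hc, hval⟩ := Finset.mem_filter.mp hc
    rw [destandardize_of_inShape hT₀ (mem_cells.mp hc)] at hval
    simpa [Fin.ext_iff] using hval
  · intro c hc c' hc' h
    have := hT₀.1.2.1 _ _ (mem_cells.mp (Finset.mem_filter.mp hc).1)
    have := hT₀.1.2.1 _ _ (mem_cells.mp (Finset.mem_filter.mp hc').1)
    exact hT₀.injOn (Finset.mem_filter.mp hc).1 (Finset.mem_filter.mp hc').1
      (by simp only [Fin.mk.injEq] at h; dsimp only; omega)
  · intro t ht
    obtain ⟨c, hc, hct⟩ := hT₀.exists_cell (k := t + 1) (by omega) t.isLt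
    refine ⟨c, Finset.mem_filter.mpr ⟨hc, ?_⟩, by simp [hct]⟩
    rw [destandardize_of_inShape hT₀ (mem_cells.mp hc)]
    simp [hct, (Finset.mem_filter.mp ht).2]

lemma wtMonomial_destandardize {lam : List ℕ} {m n : ℕ} {T₀ : Filling} (hT₀ : IsSYT lam m T₀)
    (f : Fin m → Fin n) :
    wtMonomial lam n (destandardize lam T₀ f) = ∏ t, MvPolynomial.X (f t) := by
  rw [wtMonomial, ← Finset.prod_fiberwise' Finset.univ f]
  simp [countEq_destandardize hT₀]

lemma exists_destandardize_eq {lam : List ℕ} {m n : ℕ} {T : Filling}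
    (hlam : IsPartitionOf m lam) (hT : IsSSYT lam T) (hTn : EntriesLE n T) :
    ∃ f : Fin m → Fin n, IsFWord m n (desComp lam m (stdize lam T)) f ∧
      destandardize lam (stdize lam T) f = T := by
  have hT₀ := isSYT_stdize hlam hT
  have hletter : ∀ t : Fin m, ∃ k : Fin n,
      ∀ c ∈ cells lam, stdize lam T c.1 c.2 = t + 1 → T c.1 c.2 = k + 1 := by
    intro t
    obtain ⟨c, hc, hct⟩ := hT₀.exists_cell (k := t + 1) (by omega) t.isLt
    have := hT.2.1 _ _ (mem_cells.mp hc)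
    have := hTn c.1 c.2
    refine ⟨⟨T c.1 c.2 - 1, by omega⟩, fun c' hc' hc't => ?_⟩
    rw [hT₀.injOn hc' hc (hc't.trans hct.symm)]
    dsimp only
    omega
  choose f hf using hletter
  refine ⟨f, isFWord_desComp_iff.mpr ⟨fun t t' htt' => ?_, fun t ht hd => ?_⟩, ?_⟩
  · obtain ⟨c, hc, hct⟩ := hT₀.exists_cell (k := t + 1) (by omega) t.isLt
    obtain ⟨c', hc', hct'⟩ := hT₀.exists_cell (k := t' + 1) (by omega) t'.isLt
    have := le_of_stdize_le hc hc' (by rw [hct, hct']; exact Nat.succ_le_succ htt')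
    rw [hf t c hc hct, hf t' c' hc' hct'] at this
    exact Fin.le_def.mpr (by omega)
  · obtain ⟨i1, j1, i2, j2, h1, h2, hv1, hv2, hrow⟩ := hd
    have := hT.lt_of_stdize_lt_of_row_lt hlam.1 (c := (i1, j1)) (c' := (i2, j2))
      (mem_cells.mpr h1) (mem_cells.mpr h2) (by simp only [hv1, hv2]; omega) hrow
    rw [hf ⟨t, by omega⟩ (i1, j1) (mem_cells.mpr h1) hv1,
      hf ⟨t + 1, ht⟩ (i2, j2) (mem_cells.mpr h2) hv2] at this
    exact Fin.lt_def.mpr (by omega)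
  · funext i j
    by_cases h : InShape lam i j
    · rw [destandardize_of_inShape hT₀ h, hf _ (i, j) (mem_cells.mpr h)]
      have := hT₀.1.2.1 i j h
      simp only
      omega
    · rw [destandardize_of_not_inShape h, hT.1 i j h]

lemma finite_setOf_eq_zero_of_not_inShape (lam : List ℕ) (n : ℕ) :
    {T : Filling | (∀ i j, ¬ InShape lam i j → T i j = 0) ∧ EntriesLE n T}.Finite := by
  refine Set.Finite.of_finite_image (f := fun T (c : cells lam) => T c.1.1 c.1.2)
    ((Set.Finite.pi' fun _ => Set.finite_Iic n).subset ?_) ?_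
  · rintro _ ⟨T, hT, rfl⟩ c
    exact hT.2 _ _
  · intro T hT T' hT' h
    funext i j
    by_cases hij : InShape lam i j
    · exact congrFun h ⟨(i, j), mem_cells.mpr hij⟩
    · rw [hT.1 i j hij, hT'.1 i j hij]

lemma sum_wtMonomial_eq_sum_sigma_isFWord {lam : List ℕ} {m n : ℕ} (hlam : IsPartitionOf m lam)
    {S S₀ : Finset Filling} (hS : ∀ T, T ∈ S ↔ IsSSYT lam T ∧ EntriesLE n T)
    (hS₀ : ∀ T, T ∈ S₀ ↔ IsSYT lam m T) :
    ∑ T ∈ S, wtMonomial lam n T =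
      ∑ p ∈ S₀.sigma (fun T₀ => Finset.univ.filter (IsFWord m n (desComp lam m T₀))),
        ∏ t, MvPolynomial.X (p.2 t) := by
  have hpair : ∀ p : Σ _ : Filling, Fin m → Fin n,
      p ∈ S₀.sigma (fun T₀ => Finset.univ.filter (IsFWord m n (desComp lam m T₀))) ↔
        IsSYT lam m p.1 ∧ IsFWord m n (desComp lam m p.1) p.2 := by
    simp [hS₀]
  refine (Finset.sum_bij (fun p _ => destandardize lam p.1 p.2) (fun p hp => ?_)
    (fun p hp p' hp' h => ?_) (fun T hT => ?_) (fun p hp => ?_)).symm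
  · rw [hpair] at hp
    exact (hS _).mpr ⟨isSSYT_destandardize hlam.1 hp.1 hp.2, entriesLE_destandardize⟩
  · rw [hpair] at hp hp'
    obtain ⟨T₀, f⟩ := p
    obtain ⟨T₀', f'⟩ := p'
    dsimp only at hp hp' h
    obtain rfl : T₀ = T₀' := by
      rw [← stdize_destandardize hlam.1 hp.1 hp.2, h, stdize_destandardize hlam.1 hp'.1 hp'.2]
    rw [destandardize_injective hp.1 h]
  · obtain ⟨hT, hTn⟩ := (hS T).mp hT
    obtain ⟨f, hf, hfT⟩ := exists_destandardize_eq hlam hT hTn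
    exact ⟨⟨stdize lam T, f⟩, (hpair _).mpr ⟨isSYT_stdize hlam hT, hf⟩, hfT⟩
  · exact (wtMonomial_destandardize ((hpair p).mp hp).1 p.2).symm

theorem schur_eq_sum_fundamental_general (m n : ℕ) (lam : List ℕ)
    (hlam : IsPartitionOf m lam) :
    ∑ᶠ T : {T : Filling // IsSSYT lam T ∧ EntriesLE n T}, wtMonomial lam n T.val =
      ∑ᶠ T₀ : {T : Filling // IsSYT lam m T}, Fpoly m n (desComp lam m T₀.val) := by
  have hSSYT : {T | IsSSYT lam T ∧ EntriesLE n T}.Finite :=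
    (finite_setOf_eq_zero_of_not_inShape lam n).subset fun T hT => ⟨hT.1.1, hT.2⟩
  have hSYT : {T | IsSYT lam m T}.Finite :=
    (finite_setOf_eq_zero_of_not_inShape lam m).subset fun T hT => ⟨hT.1.1, hT.2.1⟩
  rw [finsum_subtype_eq_finsum_cond,
    finsum_cond_eq_sum_of_cond_iff (t := hSSYT.toFinset) _ fun _ => by simp,
    finsum_subtype_eq_finsum_cond (f := fun T => Fpoly m n (desComp lam m T)),
    finsum_cond_eq_sum_of_cond_iff (t := hSYT.toFinset) _ fun _ => by simp]
  simp only [Fpoly]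
  rw [Finset.sum_sigma']
  exact sum_wtMonomial_eq_sum_sigma_isFWord hlam (fun _ => hSSYT.mem_toFinset)
    (fun _ => hSYT.mem_toFinset)

/-- The Schur polynomial `s_lam(x₁,…,xₙ)`, i.e. the sum of weight monomials over all
semistandard Young tableaux of shape `lam ⊢ m` with entries at most `n`, equals the sum of
the fundamental quasisymmetric polynomials `F_{DesComp(T₀)}(x₁,…,xₙ)` over all standard
Young tableaux `T₀` of shape `lam`. -/
theorem schur_eq_sum_fundamental (m n : ℕ) (hn : 1 ≤ n) (lam : List ℕ)
    (hlam : IsPartitionOf m lam) :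
    ∑ᶠ T : {T : Filling // IsSSYT lam T ∧ EntriesLE n T}, wtMonomial lam n T.val =
      ∑ᶠ T₀ : {T : Filling // IsSYT lam m T}, Fpoly m n (desComp lam m T₀.val) :=
  schur_eq_sum_fundamental_general m n lam hlam

end QC
end
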